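/- arXiv:2111.04681 — 3 statements merged into one kernel-verified Lean document; each statement's English description precedes it below -/
import Mathlib

section
/- (Varshamov–Gilbert bound) For every d ≥ 8 there exist N ≥ exp(d/8) binary vectors ω₁, …, ω_N ∈ {0,1}^d such that the Hamming distance between any two distinct vectors is at least d/4, i.e., Σ_{t=1}^d |ω_i(t) − ω_j(t)| ≥ d/4 for all i ≠ j. -/
open scoped BigOperators


lemma vg_numeric : Real.exp 3 * (1 + Real.exp (-1)) ^ 8 ≤ 256 := by
  have h1 : Real.exp 1 < 2.7182818286 := Real.exp_one_lt_d9
  have h2 : 2.7182818283 < Real.exp 1 := Real.exp_one_gt_d9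
  have h3 : Real.exp 3 = Real.exp 1 ^ 3 := by
    rw [show (3:ℝ) = (3:ℕ) * 1 by norm_num, Real.exp_nat_mul]
  have h4 : Real.exp (-1) = (Real.exp 1)⁻¹ := by rw [Real.exp_neg]
  have h5 : Real.exp (-1) ≤ 0.3678795 := by
    rw [h4, inv_le_comm₀ (by positivity) (by norm_num)]
    nlinarith
  have h6 : Real.exp 3 ≤ 2.7182818286 ^ 3 := by
    rw [h3]; exact pow_le_pow_left₀ (Real.exp_pos 1).le h1.le 3
  have h7 : (0:ℝ) ≤ 1 + Real.exp (-1) := by positivity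
  have h8 : (1 + Real.exp (-1)) ^ 8 ≤ (1.3678795:ℝ) ^ 8 :=
    pow_le_pow_left₀ h7 (by norm_num at h5 ⊢; linarith) 8
  calc Real.exp 3 * (1 + Real.exp (-1)) ^ 8
      ≤ 2.7182818286 ^ 3 * (1.3678795 : ℝ) ^ 8 :=
        mul_le_mul h6 h8 (by positivity) (by positivity)
    _ ≤ 256 := by norm_num

lemma vg_base : Real.exp (3/8) * (1 + Real.exp (-1)) ≤ 2 := by
  by_contra h
  push_neg at h
  have h8 : (2:ℝ)^8 < (Real.exp (3/8) * (1 + Real.exp (-1)))^8 :=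
    pow_lt_pow_left₀ h (by norm_num) (by norm_num)
  have h9 : (Real.exp (3/8) * (1 + Real.exp (-1)))^8
      = Real.exp 3 * (1 + Real.exp (-1))^8 := by
    rw [mul_pow, ← Real.exp_nat_mul]
    norm_num
  rw [h9] at h8
  have := vg_numeric
  norm_num at h8
  linarith



lemma vg_sum (d : ℕ) :
    ∑ k ∈ (Finset.range (d+1)).filter (fun k => 4*k < d), ((d.choose k : ℝ))
      ≤ 2^d * Real.exp (-(d:ℝ)/8) := by
  have step1 : ∑ k ∈ (Finset.range (d+1)).filter (fun k => 4*k < d), ((d.choose k : ℝ))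
      ≤ ∑ k ∈ Finset.range (d+1), (d.choose k : ℝ) * Real.exp ((d:ℝ)/4 - k) := by
    refine le_trans (Finset.sum_le_sum ?_) (Finset.sum_le_sum_of_subset_of_nonneg
      (Finset.filter_subset _ _) (fun k _ _ => by positivity))
    intro k hk
    rw [Finset.mem_filter] at hk
    have h4 : (4:ℝ) * k < d := by exact_mod_cast hk.2
    have : (1:ℝ) ≤ Real.exp ((d:ℝ)/4 - k) := by
      rw [Real.one_le_exp_iff]; linarith
    nlinarith [Nat.cast_nonneg (α := ℝ) (d.choose k)]
  have step2 : ∑ k ∈ Finset.range (d+1), (d.choose k : ℝ) * Real.exp ((d:ℝ)/4 - k)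
      = Real.exp ((d:ℝ)/4) * (Real.exp (-1) + 1)^d := by
    rw [add_pow, Finset.mul_sum]
    refine Finset.sum_congr rfl (fun k hk => ?_)
    have hk1 : Real.exp (-(k:ℝ)) = Real.exp (-1) ^ k := by
      rw [← Real.exp_nat_mul]; norm_num
    rw [show (d:ℝ)/4 - k = (d:ℝ)/4 + (-(k:ℝ)) by ring, Real.exp_add, hk1]
    ring
  have step3 : Real.exp ((d:ℝ)/4) * (Real.exp (-1) + 1)^d ≤ 2^d * Real.exp (-(d:ℝ)/8) := by
    have key : (Real.exp (3/8) * (1 + Real.exp (-1)))^d ≤ (2:ℝ)^d :=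
      pow_le_pow_left₀ (by positivity) vg_base d
    have expand : (Real.exp (3/8) * (1 + Real.exp (-1)))^d
        = Real.exp ((d:ℝ)/4) * (Real.exp (-1) + 1)^d * Real.exp ((d:ℝ)/8) := by
      rw [mul_pow, ← Real.exp_nat_mul,
        show (d:ℝ) * (3/8) = (d:ℝ)/4 + (d:ℝ)/8 by ring, Real.exp_add]
      ring
    rw [expand] at key
    have hpos : (0:ℝ) < Real.exp ((d:ℝ)/8) := Real.exp_pos _
    have hneg : Real.exp (-(d:ℝ)/8) = (Real.exp ((d:ℝ)/8))⁻¹ := by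
      rw [← Real.exp_neg]; congr 1; ring
    rw [hneg, ← div_eq_mul_inv, le_div_iff₀ hpos]
    exact key
  linarith


lemma vg_ball (d : ℕ) (x : Finset (Fin d)) :
    ((Finset.univ : Finset (Finset (Fin d))).filter
        (fun z => 4 * (symmDiff z x).card < d)).card
      = ∑ k ∈ (Finset.range (d+1)).filter (fun k => 4*k < d), d.choose k := by
  classical
  -- translate ball to the ball around ∅
  have h1 : ((Finset.univ : Finset (Finset (Fin d))).filter
        (fun z => 4 * (symmDiff z x).card < d)).card
      = ((Finset.univ : Finset (Finset (Fin d))).filter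
        (fun u => 4 * u.card < d)).card := by
    refine Finset.card_bij' (fun z _ => symmDiff z x) (fun u _ => symmDiff u x)
      ?_ ?_ ?_ ?_
    · intro z hz
      rw [Finset.mem_filter] at hz ⊢
      exact ⟨Finset.mem_univ _, hz.2⟩
    · intro u hu
      rw [Finset.mem_filter] at hu ⊢
      rw [symmDiff_symmDiff_cancel_right]
      exact ⟨Finset.mem_univ _, hu.2⟩
    · intro z _; exact symmDiff_symmDiff_cancel_right _ _
    · intro u _; exact symmDiff_symmDiff_cancel_right _ _
  rw [h1]
  -- decompose by cardinality
  have h2 : (Finset.univ : Finset (Finset (Fin d))).filter (fun u => 4 * u.card < d)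
      = ((Finset.range (d+1)).filter (fun k => 4*k < d)).biUnion
          (fun k => Finset.univ.powersetCard k) := by
    ext u
    simp only [Finset.mem_filter, Finset.mem_biUnion, Finset.mem_univ, true_and,
      Finset.mem_range, Finset.mem_powersetCard_univ]
    constructor
    · intro h
      exact ⟨u.card, ⟨Nat.lt_succ_of_le (by simpa using Finset.card_le_univ u), h⟩, rfl⟩
    · rintro ⟨k, ⟨_, hk⟩, rfl⟩
      exact hk
  rw [h2, Finset.card_biUnion]
  · refine Finset.sum_congr rfl (fun k _ => ?_)
    rw [Finset.card_powersetCard, Finset.card_univ, Fintype.card_fin]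
  · intro a _ b _ hab
    rw [Function.onFun, Finset.disjoint_left]
    intro u hu hu'
    rw [Finset.mem_powersetCard_univ] at hu hu'
    exact hab (hu ▸ hu')

/-- Varshamov–Gilbert bound: for `d ≥ 8` there exist `N ≥ exp(d/8)` binary vectors
in `{0,1}^d` with pairwise Hamming distance at least `d/4`. -/
theorem stmt5 (d : ℕ) (hd : 8 ≤ d) :
    ∃ (N : ℕ) (ω : Fin N → (Fin d → ℝ)),
      Real.exp ((d : ℝ) / 8) ≤ N ∧
      (∀ i t, ω i t = 0 ∨ ω i t = 1) ∧
      ∀ i j : Fin N, i ≠ j → (d : ℝ) / 4 ≤ ∑ t, |ω i t - ω j t| := by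
  classical
  -- a maximal code
  obtain ⟨C, hC, hCmax⟩ : ∃ C : Finset (Finset (Fin d)),
      (∀ x ∈ C, ∀ y ∈ C, x ≠ y → d ≤ 4 * (symmDiff x y).card) ∧
      ∀ C' : Finset (Finset (Fin d)),
        (∀ x ∈ C', ∀ y ∈ C', x ≠ y → d ≤ 4 * (symmDiff x y).card) →
        C'.card ≤ C.card := by
    obtain ⟨C, hmem, hmax⟩ := Finset.exists_max_image
      ((Finset.univ : Finset (Finset (Finset (Fin d)))).filter
        (fun C => ∀ x ∈ C, ∀ y ∈ C, x ≠ y → d ≤ 4 * (symmDiff x y).card))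
      Finset.card ⟨∅, by simp⟩
    rw [Finset.mem_filter] at hmem
    refine ⟨C, hmem.2, fun C' hC' => hmax C' ?_⟩
    rw [Finset.mem_filter]
    exact ⟨Finset.mem_univ _, hC'⟩
  -- maximality gives a covering
  have hcover : ∀ z : Finset (Fin d), ∃ x ∈ C, 4 * (symmDiff z x).card < d := by
    intro z
    by_contra h
    push_neg at h
    have hz : z ∉ C := by
      intro hzC
      have := h z hzC
      simp [symmDiff_self] at this
      omega
    have hprop : ∀ x ∈ insert z C, ∀ y ∈ insert z C, x ≠ y →
        d ≤ 4 * (symmDiff x y).card := by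
      intro x hx y hy hxy
      rw [Finset.mem_insert] at hx hy
      rcases hx with rfl | hx
      · rcases hy with rfl | hy
        · exact absurd rfl hxy
        · exact h y hy
      · rcases hy with rfl | hy
        · rw [symmDiff_comm]; exact h x hx
        · exact hC x hx y hy hxy
    have := hCmax _ hprop
    rw [Finset.card_insert_of_notMem hz] at this
    omega
  -- counting
  set B : ℕ := ∑ k ∈ (Finset.range (d+1)).filter (fun k => 4*k < d), d.choose k
    with hBdef
  have h2d : 2^d ≤ C.card * B := by
    have hsub : (Finset.univ : Finset (Finset (Fin d))) ⊆
        C.biUnion (fun x => Finset.univ.filter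
          (fun z => 4 * (symmDiff z x).card < d)) := by
      intro z _
      obtain ⟨x, hx, hlt⟩ := hcover z
      rw [Finset.mem_biUnion]
      exact ⟨x, hx, by rw [Finset.mem_filter]; exact ⟨Finset.mem_univ _, hlt⟩⟩
    calc 2^d = (Finset.univ : Finset (Finset (Fin d))).card := by
            rw [Finset.card_univ, Fintype.card_finset, Fintype.card_fin]
      _ ≤ (C.biUnion (fun x => Finset.univ.filter
            (fun z => 4 * (symmDiff z x).card < d))).card :=
            Finset.card_le_card hsub
      _ ≤ ∑ x ∈ C, (Finset.univ.filter
            (fun z => 4 * (symmDiff z x).card < d)).card :=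
            Finset.card_biUnion_le
      _ = ∑ _x ∈ C, B := Finset.sum_congr rfl (fun x _ => vg_ball d x)
      _ = C.card * B := by rw [Finset.sum_const, smul_eq_mul]
  have hB1 : 1 ≤ B := by
    have h0 : 0 ∈ (Finset.range (d+1)).filter (fun k => 4*k < d) := by
      rw [Finset.mem_filter, Finset.mem_range]
      omega
    calc 1 = d.choose 0 := by simp
      _ ≤ B := Finset.single_le_sum (fun k _ => Nat.zero_le _) h0
  -- the lower bound on N := C.card
  have hNlb : Real.exp ((d : ℝ) / 8) ≤ C.card := by
    have hreal : (2:ℝ)^d ≤ (C.card : ℝ) * B := by exact_mod_cast h2d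
    have hBle : (B : ℝ) ≤ 2^d * Real.exp (-(d:ℝ)/8) := by
      rw [hBdef]
      push_cast
      exact vg_sum d
    have hBpos : (0:ℝ) < B := by exact_mod_cast hB1
    have key : Real.exp ((d:ℝ)/8) * B ≤ (C.card : ℝ) * B := by
      calc Real.exp ((d:ℝ)/8) * B
          ≤ Real.exp ((d:ℝ)/8) * (2^d * Real.exp (-(d:ℝ)/8)) :=
            mul_le_mul_of_nonneg_left hBle (Real.exp_pos _).le
        _ = 2^d * (Real.exp ((d:ℝ)/8) * Real.exp (-(d:ℝ)/8)) := by ring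
        _ = 2^d := by rw [← Real.exp_add, show (d:ℝ)/8 + -(d:ℝ)/8 = 0 by ring, Real.exp_zero, mul_one]
        _ ≤ (C.card : ℝ) * B := hreal
    exact le_of_mul_le_mul_right key hBpos
  -- construct the vectors
  refine ⟨C.card, fun i t => if t ∈ (C.equivFin.symm i : Finset (Fin d)) then 1 else 0,
    hNlb, fun i t => by by_cases h : t ∈ (C.equivFin.symm i : Finset (Fin d)) <;> simp [h],
    ?_⟩
  intro i j hij
  set x : Finset (Fin d) := (C.equivFin.symm i : Finset (Fin d)) with hx
  set y : Finset (Fin d) := (C.equivFin.symm j : Finset (Fin d)) with hy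
  have hxy : x ≠ y := by
    intro h
    exact hij (C.equivFin.symm.injective (Subtype.ext h))
  have hdist : d ≤ 4 * (symmDiff x y).card :=
    hC x (C.equivFin.symm i).2 y (C.equivFin.symm j).2 hxy
  have hsum : ∑ t, |(if t ∈ x then (1:ℝ) else 0) - (if t ∈ y then 1 else 0)|
      = ((symmDiff x y).card : ℝ) := by
    have heq : ∀ t, |(if t ∈ x then (1:ℝ) else 0) - (if t ∈ y then 1 else 0)|
        = if t ∈ symmDiff x y then (1:ℝ) else 0 := by
      intro t
      by_cases hxt : t ∈ x <;> by_cases hyt : t ∈ y <;>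
        simp [hxt, hyt, Finset.mem_symmDiff]
    rw [Finset.sum_congr rfl (fun t _ => heq t), Finset.sum_boole]
    norm_cast
    congr 1
    ext t
    simp
  rw [hsum]
  have : (d:ℝ) ≤ 4 * (symmDiff x y).card := by exact_mod_cast hdist
  linarith
end

section
/- Let g : [d] → ℝ and τ : [d] → ℝ be functions such that |g(i) − τ(i)| < ε for all i ∈ [d], and suppose g satisfies the weak β-monotonicity: ((i−j)/d)^{1/β} ≤ c(g(i) − g(j) + δ) for all j < i, with δ ≤ ε and constant c > 0. If i, j ∈ [d] satisfy |i − j| ≥ d·(c'ε)^β for a suitable constant c' depending on c (e.g., c' = 4c), then g(i) < g(j) implies τ(i) < τ(j); that is, τ preserves the ordering of g on all pairs at distance at least d(c'ε)^β. -/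
/-! The weak monotonicity of `g`, inverted through `x ↦ x ^ (1/β)`, shows that on a pair at
distance at least `d (4cε)^β` the score `g` increases by at least `4ε - δ ≥ 3ε` from the smaller
to the larger index. So `g i < g j` forces `i < j` and `g j - g i ≥ 3ε`, a gap that the
`ε`-perturbation `τ` cannot close. -/

def IsWeaklyMonotone (d : ℕ) (β c δ : ℝ) (g : ℕ → ℝ) : Prop :=
  ∀ i j : ℕ, 1 ≤ j → j < i → i ≤ d → (((i : ℝ) - j) / d) ^ (1 / β) ≤ c * (g i - g j + δ)

theorem IsWeaklyMonotone.le_of_far {d : ℕ} {β c δ r : ℝ} {g : ℕ → ℝ}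
    (hg : IsWeaklyMonotone d β c δ g) (hβ : 0 < β) (hr : 0 ≤ r) {a b : ℕ}
    (hb : 1 ≤ b) (hba : b < a) (had : a ≤ d) (hfar : (d : ℝ) * r ^ β ≤ |(a : ℝ) - b|) :
    r ≤ c * (g a - g b + δ) := by
  have hd : (0 : ℝ) < d := by exact_mod_cast (show 0 < d by omega)
  have hab : (0 : ℝ) < a - b := sub_pos.2 (by exact_mod_cast hba)
  rw [abs_of_pos hab, ← le_div_iff₀' hd] at hfar
  calc r ≤ (((a : ℝ) - b) / d) ^ (1 / β) := by
        rwa [one_div, Real.le_rpow_inv_iff_of_pos hr (by positivity) hβ]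
    _ ≤ c * (g a - g b + δ) := hg a b hb hba had

/-- Order preservation under uniform approximation of a weakly β-monotone score
function: if `|g − τ| < ε` pointwise, `g` is weakly β-monotone with tolerance
`δ ≤ ε` and constant `c`, and `|i − j| ≥ d(4cε)^β`, then `g(i) < g(j)` implies
`τ(i) < τ(j)`. -/
theorem stmt11 (d : ℕ) (β ε δ c : ℝ)
    (hβ : 0 < β) (hε : 0 < ε) (hc : 0 < c) (hδ : δ ≤ ε)
    (g τ : ℕ → ℝ)
    (happrox : ∀ i, 1 ≤ i → i ≤ d → |g i - τ i| < ε)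
    (hmono : ∀ i j : ℕ, 1 ≤ j → j < i → i ≤ d →
      (((i : ℝ) - j) / d) ^ (1 / β) ≤ c * (g i - g j + δ))
    (i j : ℕ) (hi1 : 1 ≤ i) (hid : i ≤ d) (hj1 : 1 ≤ j) (hjd : j ≤ d)
    (hfar : (d : ℝ) * (4 * c * ε) ^ β ≤ |(i : ℝ) - j|)
    (hg : g i < g j) : τ i < τ j := by
  have hmono : IsWeaklyMonotone d β c δ g := hmono
  have hr : (0 : ℝ) ≤ 4 * c * ε := by positivity
  rcases lt_trichotomy i j with hij | rfl | hji
  · have hgap := hmono.le_of_far hβ hr hi1 hij hjd (by rwa [abs_sub_comm])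
    have hgap' : 4 * ε ≤ g j - g i + δ := le_of_mul_le_mul_left (by linarith) hc
    have hτi := abs_lt.1 (happrox i hi1 hid)
    have hτj := abs_lt.1 (happrox j hj1 hjd)
    linarith [hτi.1, hτj.2]
  · exact absurd hg (lt_irrefl _)
  · have hgap := hmono.le_of_far hβ hr hj1 hji hid hfar
    have hgap' : 4 * ε ≤ g i - g j + δ := le_of_mul_le_mul_left (by linarith) hc
    linarith
end

section
/- Let g, τ : [d] → ℝ with |g(i) − τ(i)| < ε for all i, let g be strictly increasing with g(i) − g(j) ≥ ((i−j)/d)^{1/β} for all j < i, and let π̂ be any permutation of [d] such that τ∘π̂⁻¹ is non-decreasing. Then (1/d) max_{i ∈ [d]} |i − π̂(i)| ≤ (4ε)^β. -/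
/-- Rank perturbation under uniform approximation (deterministic core of the
permutation-error Lemma 3): if `|g − τ| < ε` pointwise, `g` is strictly increasing
with gaps `g(i) − g(j) ≥ ((i−j)/d)^{1/β}`, and `π̂` is a permutation making
`τ ∘ π̂⁻¹` non-decreasing, then `(1/d) max_i |i − π̂(i)| ≤ (4ε)^β`. -/
theorem stmt12 (d : ℕ) (hd : 0 < d) (β ε : ℝ) (hβ : 0 < β) (hε : 0 < ε)
    (g τ : Fin d → ℝ)
    (happrox : ∀ i, |g i - τ i| < ε)
    (hmono : ∀ i j : Fin d, j < i →
      ((((i : ℕ) : ℝ) - ((j : ℕ) : ℝ)) / d) ^ (1 / β) ≤ g i - g j)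
    (πhat : Equiv.Perm (Fin d))
    (hsort : Monotone fun i => τ (πhat.symm i)) :
    (1 / (d : ℝ)) * ⨆ i : Fin d, |((i : ℕ) : ℝ) - ((πhat i : ℕ) : ℝ)|
      ≤ (4 * ε) ^ β := by
  have hd' : (0:ℝ) < d := Nat.cast_pos.mpr hd
  have hβ' : β ≠ 0 := ne_of_gt hβ
  have hB : (0:ℝ) ≤ (4*ε)^β := Real.rpow_nonneg (by linarith) β
  -- auxiliary: if p < q and g q - g p < 2ε then (q - p)/d ≤ (4ε)^β
  have aux : ∀ p q : Fin d, p < q → g q - g p < 2*ε →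
      ((q:ℕ):ℝ) - ((p:ℕ):ℝ) ≤ d * (4*ε)^β := by
    intro p q hpq hgap
    have h1 := hmono q p hpq
    set x : ℝ := (((q:ℕ):ℝ) - ((p:ℕ):ℝ)) / d with hx
    have hx0 : 0 ≤ x := by
      apply div_nonneg _ hd'.le
      have : ((p:ℕ):ℝ) ≤ ((q:ℕ):ℝ) := by exact_mod_cast (Fin.lt_iff_val_lt_val.mp hpq).le
      linarith
    have h2 : x ^ (1/β) ≤ 2*ε := le_trans h1 hgap.le
    have hxx : x ≤ (2*ε)^β := by
      have h3 : (x ^ (1/β)) ^ β ≤ (2*ε)^β :=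
        Real.rpow_le_rpow (Real.rpow_nonneg hx0 _) h2 hβ.le
      calc x = (x ^ (1/β)) ^ β := by
              rw [← Real.rpow_mul hx0, one_div_mul_cancel hβ', Real.rpow_one]
        _ ≤ (2*ε)^β := h3
    have h24 : (2*ε)^β ≤ (4*ε)^β :=
      Real.rpow_le_rpow (by linarith) (by linarith) hβ.le
    have : x ≤ (4*ε)^β := le_trans hxx h24
    calc ((q:ℕ):ℝ) - ((p:ℕ):ℝ) = d * x := by rw [hx]; field_simp [hd'.ne']
      _ ≤ d * (4*ε)^β := by nlinarith
  -- key pointwise bound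
  have key : ∀ i : Fin d, |((i:ℕ):ℝ) - ((πhat i : ℕ):ℝ)| ≤ d * (4*ε)^β := by
    intro i
    rcases lt_trichotomy ((πhat i : ℕ)) (i : ℕ) with hlt | heq | hgt
    · -- πhat i < i : find j ≤ πhat i with πhat i ≤ πhat j
      have hex : ∃ j : Fin d, j ≤ πhat i ∧ πhat i ≤ πhat j := by
        by_contra hcon
        push_neg at hcon
        have hcard : (Finset.Iic (πhat i)).card ≤ (Finset.Iio (πhat i)).card := by
          apply Finset.card_le_card_of_injOn πhat
          · intro j hj
            simp only [Finset.mem_coe, Finset.mem_Iic] at hj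
            simp only [Finset.mem_coe, Finset.mem_Iio]
            exact hcon j hj
          · exact fun a _ b _ h => πhat.injective h
        rw [Fin.card_Iic, Fin.card_Iio] at hcard
        omega
      obtain ⟨j, hj1, hj2⟩ := hex
      have hτ : τ i ≤ τ j := by
        have := hsort hj2
        simpa using this
      have hji : j < i := lt_of_le_of_lt hj1 (Fin.lt_iff_val_lt_val.mpr hlt)
      have hgi := abs_lt.mp (happrox i)
      have hgj := abs_lt.mp (happrox j)
      have hgap : g i - g j < 2*ε := by linarith
      have h := aux j i hji hgap
      have hjv : ((j:ℕ):ℝ) ≤ ((πhat i : ℕ):ℝ) := by exact_mod_cast hj1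
      rw [abs_of_nonneg (by
        have : ((πhat i : ℕ):ℝ) ≤ ((i:ℕ):ℝ) := by exact_mod_cast hlt.le
        linarith)]
      linarith
    · simp [heq, hB, mul_nonneg hd'.le hB]
    · -- i < πhat i : find j ≥ πhat i with πhat j ≤ πhat i
      have hex : ∃ j : Fin d, πhat i ≤ j ∧ πhat j ≤ πhat i := by
        by_contra hcon
        push_neg at hcon
        have hcard : (Finset.Ici (πhat i)).card ≤ (Finset.Ioi (πhat i)).card := by
          apply Finset.card_le_card_of_injOn πhat
          · intro j hj
            simp only [Finset.mem_coe, Finset.mem_Ici] at hj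
            simp only [Finset.mem_coe, Finset.mem_Ioi]
            exact hcon j hj
          · exact fun a _ b _ h => πhat.injective h
        rw [Fin.card_Ici, Fin.card_Ioi] at hcard
        have := (πhat i).isLt
        omega
      obtain ⟨j, hj1, hj2⟩ := hex
      have hτ : τ j ≤ τ i := by
        have := hsort hj2
        simpa using this
      have hij : i < j := lt_of_lt_of_le (Fin.lt_iff_val_lt_val.mpr hgt) hj1
      have hgi := abs_lt.mp (happrox i)
      have hgj := abs_lt.mp (happrox j)
      have hgap : g j - g i < 2*ε := by linarith
      have h := aux i j hij hgap
      have hjv : ((πhat i : ℕ):ℝ) ≤ ((j:ℕ):ℝ) := by exact_mod_cast hj1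
      rw [abs_of_nonpos (by
        have : ((i:ℕ):ℝ) ≤ ((πhat i : ℕ):ℝ) := by exact_mod_cast hgt.le
        linarith)]
      linarith
  have hne : Nonempty (Fin d) := ⟨⟨0, hd⟩⟩
  have hsup : (⨆ i : Fin d, |((i:ℕ):ℝ) - ((πhat i:ℕ):ℝ)|) ≤ d * (4*ε)^β :=
    ciSup_le key
  calc (1 / (d : ℝ)) * ⨆ i : Fin d, |((i : ℕ) : ℝ) - ((πhat i : ℕ) : ℝ)|
      ≤ (1/(d:ℝ)) * ((d:ℝ) * (4*ε)^β) :=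
        mul_le_mul_of_nonneg_left hsup (by positivity)
    _ = (4*ε)^β := by field_simp
end
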